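/- Let R be an irreducible root system. If β is a nonzero dominant weight lying in the root lattice ℤR, then ⟨β, α₀^∨⟩ ≥ 2, where α₀ is the highest short root. -/

import Mathlib

/-!
Since `α₀^∨` is the highest coroot and `β` is dominant, `⟨β, α^∨⟩ ≤ ⟨β, α₀^∨⟩` for every root `α`;
so if the claim failed, `β` would pair to at most `1` with every coroot. Write `β ∈ ℤR` as a sum
of roots. As `⟨β, β⟩ > 0`, some summand `γ` has `⟨β, γ^∨⟩ > 0`, hence `⟨β, γ^∨⟩ = 1` by
integrality. The remaining summands then pair to `-1` with `γ^∨`, so one of them, `γ'`, makes an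
obtuse angle with `γ`, and `γ + γ'` is `0` or a root. Merging `γ` and `γ'` shortens the sum, and
induction on its length forces `β = 0`.
-/

open RealInnerProductSpace

/-- Data of an irreducible (crystallographic, reduced) root system in a real inner
product space `V`, with a choice of positive roots `Pos`, simple roots `simples`,
Weyl group `W`, longest element `w0` and highest short root `hsr`. -/
structure RootSystemData (V : Type*) [NormedAddCommGroup V] [InnerProductSpace ℝ V] where
  R : Finset V
  Pos : Finset V
  simples : Finset V
  W : Subgroup (V ≃ₗ[ℝ] V)
  w0 : V ≃ₗ[ℝ] V
  hsr : V
  root_nonzero : ∀ α ∈ R, α ≠ 0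
  pos_subset : Pos ⊆ R
  pos_or_neg : ∀ α ∈ R, α ∈ Pos ∨ -α ∈ Pos
  pos_not_neg : ∀ α ∈ Pos, -α ∉ Pos
  simples_subset : simples ⊆ Pos
  pos_sum_simples : ∀ α ∈ Pos, ∃ c : V → ℕ, α = ∑ s ∈ simples, (c s : ℝ) • s
  refl_closed : ∀ α ∈ R, ∀ β ∈ R, β - (2 * ⟪β, α⟫ / ⟪α, α⟫) • α ∈ R
  cryst : ∀ α ∈ R, ∀ β ∈ R, ∃ n : ℤ, 2 * ⟪β, α⟫ / ⟪α, α⟫ = n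
  reduced : ∀ α ∈ R, ∀ t : ℝ, t • α ∈ R → t = 1 ∨ t = -1
  irred : ∀ S₁ S₂ : Finset V, (∀ α, α ∈ R ↔ α ∈ S₁ ∨ α ∈ S₂) →
      (∀ a ∈ S₁, ∀ b ∈ S₂, ⟪a, b⟫ = 0) → S₁ = ∅ ∨ S₂ = ∅
  W_inner : ∀ w ∈ W, ∀ x y : V, ⟪w x, w y⟫ = ⟪x, y⟫
  W_root : ∀ w ∈ W, ∀ α ∈ R, w α ∈ R
  refl_mem_W : ∀ α ∈ R, ∃ w ∈ W, ∀ x : V, w x = x - (2 * ⟪x, α⟫ / ⟪α, α⟫) • α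
  w0_mem : w0 ∈ W
  w0_pos : ∀ α ∈ Pos, -(w0 α) ∈ Pos
  hsr_pos : hsr ∈ Pos
  hsr_short : ∀ β ∈ R, ⟪hsr, hsr⟫ ≤ ⟪β, β⟫
  hsr_coroot_highest : ∀ β ∈ R, ∃ c : V → ℕ,
      (2 / ⟪hsr, hsr⟫) • hsr - (2 / ⟪β, β⟫) • β
        = ∑ s ∈ simples, (c s : ℝ) • ((2 / ⟪s, s⟫) • s)

namespace RootSystemData

variable {V : Type*} [NormedAddCommGroup V] [InnerProductSpace ℝ V] (P : RootSystemData V)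

/-- The coroot `α^∨ = 2α/⟨α,α⟩` of a root `α`. -/
noncomputable def coroot (_P : RootSystemData V) (α : V) : V := (2 / ⟪α, α⟫) • α

/-- The pairing `⟨x, α^∨⟩`. -/
noncomputable def pairing (P : RootSystemData V) (x α : V) : ℝ := ⟪x, P.coroot α⟫

/-- `ρ`, the half-sum of the positive roots. -/
noncomputable def rho : V := (2⁻¹ : ℝ) • ∑ α ∈ P.Pos, α

/-- The Coxeter number `h = ⟨ρ, α₀^∨⟩ + 1`. -/
noncomputable def coxh : ℝ := P.pairing P.rho P.hsr + 1

/-- The dot action `w · x = w(x + ρ) - ρ`. -/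
noncomputable def dot (w : V ≃ₗ[ℝ] V) (x : V) : V := w (x + P.rho) - P.rho

/-- Dominance order: `μ ≤ λ` iff `λ - μ` is a non-negative integral combination of
the simple roots. -/
def domle (μ lam : V) : Prop := ∃ c : V → ℕ, lam - μ = ∑ s ∈ P.simples, (c s : ℝ) • s

/-- A weight is dominant if it pairs non-negatively with every simple coroot. -/
def IsDominant (x : V) : Prop := ∀ α ∈ P.simples, 0 ≤ P.pairing x α

/-- Membership in the root lattice `ℤR` (the ℤ-span of the simple roots). -/
def InRootLattice (x : V) : Prop := ∃ c : V → ℤ, x = ∑ s ∈ P.simples, (c s : ℝ) • s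

end RootSystemData

section InnerProduct

variable {F : Type*} [NormedAddCommGroup F] [InnerProductSpace ℝ F]

theorem real_inner_mul_inner_self_lt {x y : F} (hx : x ≠ 0) (hy : ∀ r : ℝ, y ≠ r • x) :
    ⟪x, y⟫ * ⟪x, y⟫ < ⟪x, x⟫ * ⟪y, y⟫ := by
  have hxx : 0 < ⟪x, x⟫ := real_inner_self_pos.2 hx
  set t := ⟪x, y⟫ / ⟪x, x⟫
  have hproj : 0 < ⟪y - t • x, y - t • x⟫ := real_inner_self_pos.2 (sub_ne_zero.2 (hy t))
  have hexp : ⟪y - t • x, y - t • x⟫ = ⟪y, y⟫ - ⟪x, y⟫ * ⟪x, y⟫ / ⟪x, x⟫ := by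
    simp only [inner_sub_left, inner_sub_right, real_inner_smul_left, real_inner_smul_right,
      real_inner_comm x y, t]
    field_simp
    ring
  rw [hexp, sub_pos, div_lt_iff₀ hxx] at hproj
  linarith

end InnerProduct

section Multiset

variable {ι M : Type*} [AddCommGroup M] [LinearOrder M] [IsOrderedAddMonoid M] {s : Multiset ι}
  {f : ι → M}

theorem Multiset.exists_mem_pos_of_sum_map_pos (h : 0 < (s.map f).sum) : ∃ i ∈ s, 0 < f i := by
  by_contra! hle
  have := Multiset.sum_map_le_sum_map f (fun _ => 0) hle
  simp only [Multiset.map_const', Multiset.sum_replicate, smul_zero] at this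
  exact (h.trans_le this).false

theorem Multiset.exists_mem_neg_of_sum_map_neg (h : (s.map f).sum < 0) : ∃ i ∈ s, f i < 0 := by
  have : 0 < (s.map (fun i => -f i)).sum := by
    rwa [Multiset.sum_map_neg, neg_pos]
  obtain ⟨i, hi, hpos⟩ := Multiset.exists_mem_pos_of_sum_map_pos this
  exact ⟨i, hi, neg_pos.1 hpos⟩

end Multiset

namespace RootSystemData

variable {V : Type*} [NormedAddCommGroup V] [InnerProductSpace ℝ V] (P : RootSystemData V)

theorem inner_self_pos {α : V} (hα : α ∈ P.R) : 0 < ⟪α, α⟫ :=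
  real_inner_self_pos.2 (P.root_nonzero α hα)

theorem pairing_eq_mul (x α : V) : P.pairing x α = 2 / ⟪α, α⟫ * ⟪x, α⟫ :=
  real_inner_smul_right _ _ _

theorem pairing_self {α : V} (hα : α ∈ P.R) : P.pairing α α = 2 := by
  rw [pairing_eq_mul, div_mul_cancel₀ _ (P.inner_self_pos hα).ne']

theorem pairing_add_left (x y α : V) : P.pairing (x + y) α = P.pairing x α + P.pairing y α :=
  inner_add_left _ _ _

theorem pairing_multiset_sum (s : Multiset V) (α : V) :
    P.pairing s.sum α = (s.map (P.pairing · α)).sum := by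
  induction s using Multiset.induction with
  | empty => simp [pairing]
  | cons a s ih => simp [pairing_add_left, ih]

theorem pairing_neg_iff {x α : V} (hα : α ∈ P.R) : P.pairing x α < 0 ↔ ⟪x, α⟫ < 0 := by
  rw [pairing_eq_mul, ← neg_pos, ← mul_neg,
    mul_pos_iff_of_pos_left (div_pos two_pos (P.inner_self_pos hα)), neg_pos]

theorem pairing_pos_iff {x α : V} (hα : α ∈ P.R) : 0 < P.pairing x α ↔ 0 < ⟪x, α⟫ := by
  rw [pairing_eq_mul, mul_pos_iff_of_pos_left (div_pos two_pos (P.inner_self_pos hα))]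

theorem sub_pairing_smul_mem {α β : V} (hα : α ∈ P.R) (hβ : β ∈ P.R) :
    β - P.pairing β α • α ∈ P.R := by
  simpa only [pairing_eq_mul, div_mul_eq_mul_div] using P.refl_closed α hα β hβ

theorem neg_mem {α : V} (hα : α ∈ P.R) : -α ∈ P.R := by
  simpa [P.pairing_self hα, two_smul] using P.sub_pairing_smul_mem hα hα

theorem exists_int_pairing_eq {γ α : V} (hγ : γ ∈ P.R) (hα : α ∈ P.R) :
    ∃ n : ℤ, P.pairing γ α = n := by
  simpa only [pairing_eq_mul, div_mul_eq_mul_div] using P.cryst α hα γ hγ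

theorem exists_int_pairing_multiset_sum_eq {s : Multiset V} (hs : ∀ γ ∈ s, γ ∈ P.R) {α : V}
    (hα : α ∈ P.R) : ∃ n : ℤ, P.pairing s.sum α = n := by
  induction s using Multiset.induction with
  | empty => exact ⟨0, by simp [pairing]⟩
  | cons a s ih =>
    obtain ⟨m, hm⟩ := P.exists_int_pairing_eq (hs a (Multiset.mem_cons_self a s)) hα
    obtain ⟨n, hn⟩ := ih fun γ hγ => hs γ (Multiset.mem_cons_of_mem hγ)
    exact ⟨m + n, by rw [Multiset.sum_cons, pairing_add_left, hm, hn, Int.cast_add]⟩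

theorem pairing_mul_pairing_lt_four {α γ : V} (hα : α ∈ P.R) (hγ : γ ∈ P.R) (hne : γ ≠ α)
    (hne' : γ ≠ -α) : P.pairing γ α * P.pairing α γ < 4 := by
  have hαα := P.inner_self_pos hα
  have hγγ := P.inner_self_pos hγ
  have hnotsmul : ∀ r : ℝ, γ ≠ r • α := by
    rintro r rfl
    rcases P.reduced α hα r hγ with rfl | rfl
    · exact hne (one_smul ℝ α)
    · exact hne' (neg_one_smul ℝ α)
  have hCS := real_inner_mul_inner_self_lt (P.root_nonzero α hα) hnotsmul
  rw [real_inner_comm γ α] at hCS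
  rw [pairing_eq_mul, pairing_eq_mul, real_inner_comm γ α]
  calc 2 / ⟪α, α⟫ * ⟪γ, α⟫ * (2 / ⟪γ, γ⟫ * ⟪γ, α⟫)
      = 4 * (⟪γ, α⟫ * ⟪γ, α⟫) / (⟪α, α⟫ * ⟪γ, γ⟫) := by field_simp; ring
    _ < 4 := by rw [div_lt_iff₀ (by positivity)]; linarith

theorem add_mem_of_pairing_neg {α γ : V} (hα : α ∈ P.R) (hγ : γ ∈ P.R)
    (hneg : P.pairing γ α < 0) (hne : γ ≠ -α) : γ + α ∈ P.R := by
  have hneg' : P.pairing α γ < 0 := by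
    rw [P.pairing_neg_iff hα] at hneg
    rwa [P.pairing_neg_iff hγ, real_inner_comm]
  have hne' : γ ≠ α := by
    rintro rfl
    linarith [P.pairing_self hγ]
  have hlt := P.pairing_mul_pairing_lt_four hα hγ hne' hne
  obtain ⟨a, ha⟩ := P.exists_int_pairing_eq hγ hα
  obtain ⟨b, hb⟩ := P.exists_int_pairing_eq hα hγ
  rw [ha, hb] at hlt
  rw [ha] at hneg
  rw [hb] at hneg'
  have ha' : a < 0 := by exact_mod_cast hneg
  have hb' : b < 0 := by exact_mod_cast hneg'
  have hab : a * b < 4 := by exact_mod_cast hlt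
  have : a = -1 ∨ b = -1 := by
    by_contra! h
    nlinarith [show a ≤ -2 by omega, show b ≤ -2 by omega]
  rcases this with h | h
  · simpa [ha, h] using P.sub_pairing_smul_mem hα hγ
  · simpa [hb, h, add_comm] using P.sub_pairing_smul_mem hγ hα

theorem exists_mem_pairing_sum_eq_one {s : Multiset V} (hs : ∀ γ ∈ s, γ ∈ P.R) (hne : s.sum ≠ 0)
    (hlt : ∀ α ∈ P.R, P.pairing s.sum α < 2) : ∃ γ ∈ s, P.pairing s.sum γ = 1 := by
  have hpos : 0 < (s.map (innerₛₗ ℝ s.sum)).sum := by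
    rw [← map_multiset_sum, innerₛₗ_apply_apply]
    exact real_inner_self_pos.2 hne
  obtain ⟨γ, hγ, hγpos⟩ := Multiset.exists_mem_pos_of_sum_map_pos hpos
  rw [innerₛₗ_apply_apply] at hγpos
  obtain ⟨n, hn⟩ := P.exists_int_pairing_multiset_sum_eq hs (hs γ hγ)
  have h0 : (0 : ℝ) < n := hn ▸ (P.pairing_pos_iff (hs γ hγ)).2 hγpos
  have h2 : (n : ℝ) < 2 := hn ▸ hlt γ (hs γ hγ)
  have : n = 1 := by
    have : 0 < n := by exact_mod_cast h0
    have : n < 2 := by exact_mod_cast h2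
    omega
  exact ⟨γ, hγ, by rw [hn, this, Int.cast_one]⟩

theorem exists_shorter_of_pairing_sum_eq_one {s : Multiset V} (hs : ∀ γ ∈ s, γ ∈ P.R) {γ : V}
    (hγ : γ ∈ s) (h1 : P.pairing s.sum γ = 1) :
    ∃ t : Multiset V, (∀ δ ∈ t, δ ∈ P.R) ∧ t.sum = s.sum ∧ t.card < s.card := by
  obtain ⟨s', rfl⟩ := Multiset.exists_cons_of_mem hγ
  have hγR := hs γ (Multiset.mem_cons_self γ s')
  have hrest : (s'.map (P.pairing · γ)).sum < 0 := by
    rw [Multiset.sum_cons, pairing_add_left, P.pairing_self hγR] at h1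
    rw [← pairing_multiset_sum]
    linarith
  obtain ⟨γ', hγ', hneg⟩ := Multiset.exists_mem_neg_of_sum_map_neg hrest
  obtain ⟨s'', rfl⟩ := Multiset.exists_cons_of_mem hγ'
  have hs'' : ∀ δ ∈ s'', δ ∈ P.R := fun δ hδ =>
    hs δ (Multiset.mem_cons_of_mem (Multiset.mem_cons_of_mem hδ))
  by_cases hopp : γ' = -γ
  · exact ⟨s'', hs'', by simp [hopp], by simp⟩
  · refine ⟨(γ' + γ) ::ₘ s'', ?_, by simp only [Multiset.sum_cons]; abel, by simp⟩
    have hγ'R := hs γ' (Multiset.mem_cons_of_mem hγ')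
    simpa [or_imp, forall_and] using
      And.intro (P.add_mem_of_pairing_neg hγR hγ'R hneg hopp) hs''

theorem multiset_sum_eq_zero_of_pairing_lt_two (s : Multiset V) (hs : ∀ γ ∈ s, γ ∈ P.R)
    (hlt : ∀ α ∈ P.R, P.pairing s.sum α < 2) : s.sum = 0 := by
  by_contra hne
  obtain ⟨γ, hγ, h1⟩ := P.exists_mem_pairing_sum_eq_one hs hne hlt
  obtain ⟨t, ht, hsum, hcard⟩ := P.exists_shorter_of_pairing_sum_eq_one hs hγ h1
  exact hne (hsum ▸ multiset_sum_eq_zero_of_pairing_lt_two t ht (hsum ▸ hlt))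
termination_by s.card

theorem exists_multiset_sum_eq_of_inRootLattice {x : V} (hx : P.InRootLattice x) :
    ∃ s : Multiset V, (∀ γ ∈ s, γ ∈ P.R) ∧ s.sum = x := by
  obtain ⟨c, rfl⟩ := hx
  have hmem : ∑ s ∈ P.simples, (c s : ℝ) • s ∈ AddSubgroup.closure (P.R : Set V) :=
    AddSubgroup.sum_mem _ fun s hs => by
      rw [Int.cast_smul_eq_zsmul]
      exact zsmul_mem (AddSubgroup.subset_closure (P.pos_subset (P.simples_subset hs))) _
  rw [← AddSubgroup.mem_toAddSubmonoid, AddSubgroup.closure_toAddSubmonoid] at hmem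
  obtain ⟨s, hs, hsum⟩ := AddSubmonoid.exists_multiset_of_mem_closure hmem
  refine ⟨s, fun γ hγ => ?_, hsum⟩
  rcases hs γ hγ with h | h
  · exact h
  · simpa using P.neg_mem h

theorem pairing_le_pairing_hsr {β α : V} (hd : P.IsDominant β) (hα : α ∈ P.R) :
    P.pairing β α ≤ P.pairing β P.hsr := by
  obtain ⟨c, hc⟩ := P.hsr_coroot_highest α hα
  have hdiff : P.pairing β P.hsr - P.pairing β α = ∑ s ∈ P.simples, (c s : ℝ) * P.pairing β s := by
    have := congrArg (⟪β, ·⟫) hc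
    simp only [inner_sub_right, inner_sum, real_inner_smul_right] at this
    simpa only [pairing_eq_mul] using this
  have : 0 ≤ ∑ s ∈ P.simples, (c s : ℝ) * P.pairing β s :=
    Finset.sum_nonneg fun s hs => mul_nonneg (Nat.cast_nonneg _) (hd s hs)
  linarith

end RootSystemData

/-- A nonzero dominant weight in the root lattice pairs at least `2` with `α₀^∨`. -/
theorem pairing_hsr_ge_two {V : Type*} [NormedAddCommGroup V] [InnerProductSpace ℝ V] (P : RootSystemData V)
    (β : V) (hd : P.IsDominant β) (h0 : β ≠ 0) (hl : P.InRootLattice β) :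
    2 ≤ P.pairing β P.hsr := by
  by_contra! hk
  have hlt : ∀ α ∈ P.R, P.pairing β α < 2 := fun α hα =>
    (P.pairing_le_pairing_hsr hd hα).trans_lt hk
  obtain ⟨s, hs, rfl⟩ := P.exists_multiset_sum_eq_of_inRootLattice hl
  exact h0 (P.multiset_sum_eq_zero_of_pairing_lt_two s hs hlt)
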